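/- Let g : ℝ^d → ℝ be twice continuously differentiable, and suppose the trajectory point (x,u) equals the nominal point (z,v) plus an error e with e = Σ_{τ=0}^{t-1} Φ_τ d_τ, where each disturbance d_τ lies in Λ_τ·B_∞ for matrices Λ_τ and B_∞ the unit ∞-ball. Suppose further that (1/2)ξᵀ∇²g(p)ξ ≤ χ for all points p on the segment between (z,v) and (x,u) and all ξ in the unit ∞-ball, and that ‖e‖_∞ ≤ ρ. Then g(x,u) ≤ g(z,v) + Σ_{τ=0}^{t-1} ‖(Φ_τ Λ_τ)ᵀ ∇g(z,v)‖₁ + χ·ρ². -/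

import Mathlib

/-!
Taylor's theorem along the segment `θ ↦ w + θ • e` bounds `g (w + e)` by
`g w + Dg(w) e + χ ρ²`, once the Hessian bound on the unit ball is rescaled to `e`.
Writing `e = ∑ Φ_τ Λ_τ ξ_τ`, the linear term `Dg(w) e` splits into the pairings
`⟨(Φ_τ Λ_τ)ᵀ ∇g(w), ξ_τ⟩`, each bounded by the `ℓ¹` norm of the first factor since `‖ξ_τ‖_∞ ≤ 1`.
-/

open Matrix Set

theorem LinearMap.apply_eq_dotProduct {R ι : Type*} [CommSemiring R] [Fintype ι] [DecidableEq ι]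
    (L : (ι → R) →ₗ[R] R) (v : ι → R) :
    L v = (fun i => L (Pi.single i 1)) ⬝ᵥ v := by
  conv_lhs => rw [← Finset.univ_sum_single v]
  simp only [map_sum, dotProduct]
  refine Finset.sum_congr rfl fun i _ => ?_
  rw [mul_comm, ← smul_eq_mul, ← map_smul, ← Pi.single_smul, smul_eq_mul, mul_one]

theorem dotProduct_le_sum_abs {ι : Type*} [Fintype ι] (a ξ : ι → ℝ) (hξ : ‖ξ‖ ≤ 1) :
    a ⬝ᵥ ξ ≤ ∑ j, |a j| :=
  Finset.sum_le_sum fun j _ => calc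
    a j * ξ j ≤ |a j| * |ξ j| := by rw [← abs_mul]; exact le_abs_self _
    _ ≤ |a j| * 1 := by gcongr; exact (norm_le_pi_norm ξ j).trans hξ
    _ = |a j| := mul_one _

theorem sub_le_sub_of_hasDerivAt_le {f g f' g' : ℝ → ℝ} {a b : ℝ} (hab : a ≤ b)
    (hf : ∀ x, HasDerivAt f (f' x) x) (hg : ∀ x, HasDerivAt g (g' x) x)
    (hle : ∀ x ∈ Icc a b, f' x ≤ g' x) : f b - f a ≤ g b - g a := by
  have hanti : AntitoneOn (f - g) (Icc a b) := by
    refine antitoneOn_of_hasDerivWithinAt_nonpos (convex_Icc a b)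
      (fun x _ => ((hf x).sub (hg x)).continuousAt.continuousWithinAt)
      (fun x _ => ((hf x).sub (hg x)).hasDerivWithinAt) fun x hx => ?_
    exact sub_nonpos.2 (hle x (interior_subset hx))
  have := hanti (left_mem_Icc.2 hab) (right_mem_Icc.2 hab) hab
  simp only [Pi.sub_apply] at this
  linarith

theorem LinearMap.apply_mulVec_le_sum_abs {m k : Type*} [Fintype m] [DecidableEq m] [Fintype k]
    (L : (m → ℝ) →ₗ[ℝ] ℝ) (M : Matrix m k ℝ) {ξ : k → ℝ} (hξ : ‖ξ‖ ≤ 1) :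
    L (M *ᵥ ξ) ≤ ∑ j, |(Mᵀ *ᵥ fun i => L (Pi.single i 1)) j| := by
  rw [L.apply_eq_dotProduct, dotProduct_mulVec, ← mulVec_transpose]
  exact dotProduct_le_sum_abs _ _ hξ

theorem LinearMap.apply_sum_mulVec_le {ι m n k : Type*} [Fintype m] [DecidableEq m] [Fintype n]
    [Fintype k] (L : (m → ℝ) →ₗ[ℝ] ℝ) (s : Finset ι) (Φ : ι → Matrix m n ℝ)
    (Λ : ι → Matrix n k ℝ) (d : ι → n → ℝ)
    (hd : ∀ τ ∈ s, ∃ ξ : k → ℝ, ‖ξ‖ ≤ 1 ∧ d τ = Λ τ *ᵥ ξ) :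
    L (∑ τ ∈ s, Φ τ *ᵥ d τ) ≤ ∑ τ ∈ s, ∑ j, |((Φ τ * Λ τ)ᵀ *ᵥ fun i => L (Pi.single i 1)) j| := by
  rw [map_sum]
  refine Finset.sum_le_sum fun τ hτ => ?_
  obtain ⟨ξ, hξ, hdτ⟩ := hd τ hτ
  rw [hdτ, mulVec_mulVec]
  exact L.apply_mulVec_le_sum_abs _ hξ

theorem le_add_deriv_add_of_second_deriv_le {f f' f'' : ℝ → ℝ} {c : ℝ}
    (hf : ∀ x, HasDerivAt f (f' x) x) (hf' : ∀ x, HasDerivAt f' (f'' x) x)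
    (hc : ∀ x ∈ Icc (0 : ℝ) 1, f'' x ≤ c) : f 1 ≤ f 0 + f' 0 + c / 2 := by
  have hf'_le : ∀ x ∈ Icc (0 : ℝ) 1, f' x ≤ f' 0 + c * x := fun x hx => by
    have := sub_le_sub_of_hasDerivAt_le hx.1 hf' (fun y => (hasDerivAt_id y).const_mul c)
      fun y hy => (hc y ⟨hy.1, hy.2.trans hx.2⟩).trans_eq (mul_one c).symm
    simp only [id, mul_zero] at this
    linarith
  have hq : ∀ x, HasDerivAt (fun y => f' 0 * y + c / 2 * y ^ 2) (f' 0 + c * x) x := fun x =>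
    (((hasDerivAt_id' x).const_mul (f' 0)).add ((hasDerivAt_pow 2 x).const_mul (c / 2))).congr_deriv
      (by ring)
  have := sub_le_sub_of_hasDerivAt_le zero_le_one hf hq hf'_le
  norm_num at this
  linarith

theorem le_add_fderiv_add_of_fderiv_fderiv_le {E : Type*} [NormedAddCommGroup E]
    [NormedSpace ℝ E] {g : E → ℝ} (hg : ContDiff ℝ 2 g) (w e : E) {c : ℝ}
    (hc : ∀ θ ∈ Icc (0 : ℝ) 1, fderiv ℝ (fderiv ℝ g) (w + θ • e) e e ≤ c) :
    g (w + e) ≤ g w + fderiv ℝ g w e + c / 2 := by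
  have hline : ∀ θ : ℝ, HasDerivAt (fun s : ℝ => w + s • e) e θ := fun θ => by
    simpa using ((hasDerivAt_id θ).smul_const e).const_add w
  have hg1 : Differentiable ℝ g := hg.differentiable (by norm_num)
  have hg2 : Differentiable ℝ (fderiv ℝ g) :=
    (hg.fderiv_right (m := 1) (by norm_num)).differentiable one_ne_zero
  have h := le_add_deriv_add_of_second_deriv_le (f := fun θ => g (w + θ • e))
    (f' := fun θ => fderiv ℝ g (w + θ • e) e)
    (fun θ => (hg1 _).hasFDerivAt.comp_hasDerivAt θ (hline θ))
    (fun θ => ((ContinuousLinearMap.apply ℝ ℝ e).hasFDerivAt.comp_hasDerivAt θ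
      ((hg2 _).hasFDerivAt.comp_hasDerivAt θ (hline θ))))
    hc
  simpa using h

theorem ContinuousLinearMap.apply_self_le_mul_sq {E : Type*} [NormedAddCommGroup E]
    [NormedSpace ℝ E] (B : E →L[ℝ] E →L[ℝ] ℝ) {k ρ : ℝ} (hB : ∀ ξ : E, ‖ξ‖ ≤ 1 → B ξ ξ ≤ k)
    {e : E} (he : ‖e‖ ≤ ρ) : B e e ≤ k * ρ ^ 2 := by
  have hk : 0 ≤ k := by simpa using hB 0 (by simp)
  rcases eq_or_ne e 0 with rfl | he0
  · simpa using mul_nonneg hk (sq_nonneg ρ)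
  have hunit : ‖‖e‖⁻¹ • e‖ ≤ 1 := (norm_smul_inv_norm he0).le
  have hscale : B e e = ‖e‖ ^ 2 * B (‖e‖⁻¹ • e) (‖e‖⁻¹ • e) := by
    simp only [map_smul, _root_.smul_apply, smul_eq_mul]
    field_simp
  calc B e e ≤ ‖e‖ ^ 2 * k := hscale ▸ mul_le_mul_of_nonneg_left (hB _ hunit) (sq_nonneg _)
    _ ≤ ρ ^ 2 * k := by gcongr
    _ = k * ρ ^ 2 := mul_comm _ _

theorem stmt7 {dd nn kk : ℕ} (t : ℕ) (g : (Fin dd → ℝ) → ℝ) (hg : ContDiff ℝ 2 g)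
    (y w e : Fin dd → ℝ) (heq : y = w + e)
    (Φ : ℕ → Matrix (Fin dd) (Fin nn) ℝ) (Λ : ℕ → Matrix (Fin nn) (Fin kk) ℝ)
    (dist : ℕ → Fin nn → ℝ)
    (he : e = ∑ τ ∈ Finset.range t, (Φ τ).mulVec (dist τ))
    (hd : ∀ τ ∈ Finset.range t, ∃ ξ : Fin kk → ℝ, ‖ξ‖ ≤ 1 ∧ dist τ = (Λ τ).mulVec ξ)
    (χ ρ : ℝ)
    (hHess : ∀ θ ∈ Set.Icc (0:ℝ) 1, ∀ ξ : Fin dd → ℝ, ‖ξ‖ ≤ 1 →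
      (1/2) * fderiv ℝ (fderiv ℝ g) (w + θ • e) ξ ξ ≤ χ)
    (hρ : ‖e‖ ≤ ρ) :
    g y ≤ g w + (∑ τ ∈ Finset.range t,
        ∑ j, |(Φ τ * Λ τ)ᵀ.mulVec (fun i => fderiv ℝ g w (Pi.single i 1)) j|)
      + χ * ρ^2 := by
  have hquad : ∀ θ ∈ Icc (0 : ℝ) 1, fderiv ℝ (fderiv ℝ g) (w + θ • e) e e ≤ 2 * χ * ρ ^ 2 :=
    fun θ hθ => ContinuousLinearMap.apply_self_le_mul_sq _
      (fun ξ hξ => by linarith [hHess θ hθ ξ hξ]) hρ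
  have hlin := (fderiv ℝ g w : (Fin dd → ℝ) →ₗ[ℝ] ℝ).apply_sum_mulVec_le
    (Finset.range t) Φ Λ dist hd
  rw [← he, ContinuousLinearMap.coe_coe] at hlin
  calc g y ≤ g w + fderiv ℝ g w e + 2 * χ * ρ ^ 2 / 2 :=
        heq ▸ le_add_fderiv_add_of_fderiv_fderiv_le hg w e hquad
    _ ≤ _ := by linarith
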